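/- Let (x^l)_{l≥0} be the sequence generated by x^{l+1} = G(x^l) from a starting point x^0 ∈ (ℝ^n)^M × ℝ^n × S_n^{++}(ℝ). Then every accumulation point x* ∈ (ℝ^n)^M × ℝ^n × S_n^{++}(ℝ) of (x^l) is a fixed point of G: G(x*) = x*. -/

import Mathlib

open Matrix Filter

noncomputable def f (n M : ℕ) (κ ν : ℝ) (Z : Fin M → Fin n → ℝ)
    (D : Fin M → Matrix (Fin n) (Fin n) ℝ) (SN : Fin M → Matrix (Fin n) (Fin n) ℝ)
    (μ0 : Fin n → ℝ) (S0 : Matrix (Fin n) (Fin n) ℝ)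
    (C : Fin M → Fin n → ℝ) (μ : Fin n → ℝ) (Λ : Matrix (Fin n) (Fin n) ℝ) : ℝ :=
  (1/2) * ∑ i, (Z i - (D i).mulVec (C i)) ⬝ᵥ ((SN i)⁻¹).mulVec (Z i - (D i).mulVec (C i))
    - ((ν - n + M)/2) * Real.log Λ.det
    + (1/2) * ∑ i, (C i - μ) ⬝ᵥ Λ.mulVec (C i - μ)
    + (κ/2) * ((μ - μ0) ⬝ᵥ Λ.mulVec (μ - μ0))
    + (1/2) * (ν • S0 * Λ).trace

/-- The alternating-minimization map `G` on `(ℝⁿ)^M × ℝⁿ × S_n^{++}(ℝ)`. -/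
noncomputable def G (n M : ℕ) (κ ν : ℝ) (Z : Fin M → Fin n → ℝ)
    (D : Fin M → Matrix (Fin n) (Fin n) ℝ) (SN : Fin M → Matrix (Fin n) (Fin n) ℝ)
    (μ0 : Fin n → ℝ) (S0 : Matrix (Fin n) (Fin n) ℝ)
    (x : (Fin M → Fin n → ℝ) × (Fin n → ℝ) × Matrix (Fin n) (Fin n) ℝ) :
    (Fin M → Fin n → ℝ) × (Fin n → ℝ) × Matrix (Fin n) (Fin n) ℝ :=
  let Λ := x.2.2
  let A : Fin M → Matrix (Fin n) (Fin n) ℝ :=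
    fun i => Λ⁻¹ * (D i)ᵀ * (D i * Λ⁻¹ * (D i)ᵀ + SN i)⁻¹
  let μ' : Fin n → ℝ :=
    (κ • (1 : Matrix (Fin n) (Fin n) ℝ) + ∑ i, A i * D i)⁻¹.mulVec
      (∑ i, (A i).mulVec (Z i) + κ • μ0)
  let C' : Fin M → Fin n → ℝ := fun i => (A i).mulVec (Z i - (D i).mulVec μ') + μ'
  let Λ' : Matrix (Fin n) (Fin n) ℝ :=
    ((ν + M - n)⁻¹ • (ν • S0 + κ • vecMulVec (μ' - μ0) (μ' - μ0)
      + ∑ i, vecMulVec (C' i - μ') (C' i - μ')))⁻¹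
  (C', μ', Λ')

/-!
`G` is one sweep of block-coordinate descent on `f`. For fixed `Λ ≻ 0`, `f(·, ·, Λ)` is a convex
quadratic whose unique stationary point is `(C', μ')`; expanding `f` around a stationary point
shows that it is the unique minimizer. For fixed `(C, μ)`, `f(C, μ, ·)` is, up to scale and shift,
`Λ ↦ tr(PΛ) - log det Λ` with `P⁻¹ = Λ'`; conjugating by `√P` reduces its minimization to
`tr W - log det W ≥ n` for `W ≻ 0`, i.e. to `λ - log λ ≥ 1` for every eigenvalue, with equality
only at `W = 1`. Hence `f ∘ G ≤ f`, with equality only at fixed points of `G`.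

Along the iterates `f` decreases, so `f(x^l) → f(x*)`. Since `f` and `G` are continuous where `Λ`
is positive definite, also `f(x^{l_k + 1}) = f(G x^{l_k}) → f(G x*)`, so `f(G x*) = f(x*)` and
`x*` is a fixed point.
-/

open Topology

theorem Antitone.tendsto_of_tendsto_subseq {α : Type*} [ConditionallyCompleteLinearOrder α]
    [TopologicalSpace α] [OrderTopology α] {u : ℕ → α} (hu : Antitone u) {φ : ℕ → ℕ}
    (hφ : StrictMono φ) {a : α} (h : Tendsto (u ∘ φ) atTop (𝓝 a)) :
    Tendsto u atTop (𝓝 a) := by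
  have hbdd : BddBelow (Set.range u) := by
    refine ⟨a, Set.forall_mem_range.2 fun l => ?_⟩
    exact ((hu.comp_monotone hφ.monotone).le_of_tendsto h l).trans (hu (hφ.le_apply))
  have hinf := tendsto_atTop_ciInf hu hbdd
  rwa [tendsto_nhds_unique (hinf.comp hφ.tendsto_atTop) h] at hinf

theorem Function.isFixedPt_of_tendsto_subseq_of_descent {X : Type*} [TopologicalSpace X]
    {T : X → X} {F : X → ℝ} {U : Set X} (hTU : Set.MapsTo T U U)
    (hdesc : ∀ y ∈ U, F (T y) ≤ F y) (hfix : ∀ y ∈ U, F y ≤ F (T y) → T y = y)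
    {x : ℕ → X} (hx0 : x 0 ∈ U) (hx : ∀ l, x (l + 1) = T (x l))
    {φ : ℕ → ℕ} (hφ : StrictMono φ) {p : X} (hp : p ∈ U) (hlim : Tendsto (x ∘ φ) atTop (𝓝 p))
    (hT : ContinuousAt T p) (hF : ContinuousAt F p) (hFT : ContinuousAt F (T p)) :
    Function.IsFixedPt T p := by
  have hxU : ∀ l, x l ∈ U := fun l => by
    induction l with
    | zero => exact hx0
    | succ l ih => exact hx l ▸ hTU ih
  have hanti : Antitone (F ∘ x) :=
    antitone_nat_of_succ_le fun l => by simpa only [Function.comp, hx l] using hdesc _ (hxU l)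
  have hconv : Tendsto (F ∘ x) atTop (𝓝 (F p)) :=
    hanti.tendsto_of_tendsto_subseq hφ (hF.tendsto.comp hlim)
  have hnext : Tendsto (fun k => F (x (φ k + 1))) atTop (𝓝 (F (T p))) := by
    simp only [hx]
    exact hFT.tendsto.comp (hT.tendsto.comp hlim)
  have hnext' : Tendsto (fun k => F (x (φ k + 1))) atTop (𝓝 (F p)) :=
    hconv.comp ((tendsto_add_atTop_nat 1).comp hφ.tendsto_atTop)
  exact hfix p hp (tendsto_nhds_unique hnext' hnext).le

@[fun_prop]
theorem ContinuousAt.matrix_inv {X ι 𝕜 : Type*} [TopologicalSpace X] [Fintype ι] [DecidableEq ι]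
    [Field 𝕜] [TopologicalSpace 𝕜] [IsTopologicalDivisionRing 𝕜] {g : X → Matrix ι ι 𝕜} {p : X}
    (hg : ContinuousAt g p) (h : (g p).det ≠ 0) : ContinuousAt (fun q => (g q)⁻¹) p :=
  (continuousAt_matrix_inv _ (by rw [Ring.inverse_eq_inv']; exact continuousAt_inv₀ h)).comp hg

namespace Matrix

variable {ι : Type*} [Fintype ι]

theorem trace_vecMulVec_mul {R : Type*} [CommSemiring R] (u v : ι → R)
    (A : Matrix ι ι R) : (vecMulVec u v * A).trace = v ⬝ᵥ A *ᵥ u := by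
  rw [vecMulVec_mul, trace_vecMulVec, dotProduct_comm, dotProduct_mulVec]

theorem IsSymm.add_dotProduct_mulVec_add {R : Type*} [CommRing R]
    {S : Matrix ι ι R} (hS : S.IsSymm) (u v : ι → R) :
    (u + v) ⬝ᵥ S *ᵥ (u + v) = u ⬝ᵥ S *ᵥ u + 2 * (v ⬝ᵥ S *ᵥ u) + v ⬝ᵥ S *ᵥ v := by
  have hcomm : u ⬝ᵥ S *ᵥ v = v ⬝ᵥ S *ᵥ u := by
    conv_lhs => rw [← hS.eq]
    exact dotProduct_transpose_mulVec S u v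
  rw [mulVec_add, add_dotProduct, dotProduct_add, dotProduct_add, hcomm]
  ring

theorem PosSemidef.dotProduct_mulVec_nonneg' {A : Matrix ι ι ℝ} (hA : A.PosSemidef)
    (x : ι → ℝ) : 0 ≤ x ⬝ᵥ A *ᵥ x := by
  simpa using hA.dotProduct_mulVec_nonneg x

theorem PosDef.eq_zero_of_dotProduct_mulVec_nonpos {A : Matrix ι ι ℝ} (hA : A.PosDef)
    {x : ι → ℝ} (h : x ⬝ᵥ A *ᵥ x ≤ 0) : x = 0 := by
  by_contra hx
  exact h.not_gt (by simpa using hA.dotProduct_mulVec_pos hx)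

section

variable [DecidableEq ι]

theorem IsHermitian.eq_one_of_eigenvalues_eq_one {W : Matrix ι ι ℝ} (hW : W.IsHermitian)
    (h : ∀ i, hW.eigenvalues i = 1) : W = 1 := by
  have hdiag : diagonal (RCLike.ofReal ∘ hW.eigenvalues) = (1 : Matrix ι ι ℝ) := by
    rw [← diagonal_one]
    exact congrArg diagonal (funext fun i => by simp [h i])
  rw [hW.spectral_theorem, hdiag, map_one]

theorem PosDef.trace_sub_log_det_eq_sum {W : Matrix ι ι ℝ} (hW : W.PosDef) :
    W.trace - Real.log W.det = ∑ i, (hW.1.eigenvalues i - Real.log (hW.1.eigenvalues i)) := by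
  rw [hW.1.trace_eq_sum_eigenvalues, hW.1.det_eq_prod_eigenvalues, Finset.sum_sub_distrib]
  simp only [RCLike.ofReal_real_eq_id, id]
  rw [Real.log_prod fun i _ => (hW.eigenvalues_pos i).ne']

theorem PosDef.card_le_trace_sub_log_det {W : Matrix ι ι ℝ} (hW : W.PosDef) :
    (Fintype.card ι : ℝ) ≤ W.trace - Real.log W.det := by
  rw [hW.trace_sub_log_det_eq_sum, Fintype.card_eq_sum_ones, Nat.cast_sum, Nat.cast_one]
  refine Finset.sum_le_sum fun i _ => ?_
  linarith [Real.log_le_sub_one_of_pos (hW.eigenvalues_pos i)]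

theorem PosDef.eq_one_of_trace_sub_log_det_le {W : Matrix ι ι ℝ} (hW : W.PosDef)
    (h : W.trace - Real.log W.det ≤ Fintype.card ι) : W = 1 := by
  refine hW.1.eq_one_of_eigenvalues_eq_one fun i => ?_
  by_contra hne
  have hlt : (Fintype.card ι : ℝ) < W.trace - Real.log W.det := by
    rw [hW.trace_sub_log_det_eq_sum, Fintype.card_eq_sum_ones, Nat.cast_sum, Nat.cast_one]
    refine Finset.sum_lt_sum (fun j _ => ?_) ⟨i, Finset.mem_univ i, ?_⟩
    · linarith [Real.log_le_sub_one_of_pos (hW.eigenvalues_pos j)]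
    · linarith [Real.log_lt_sub_one_of_pos (hW.eigenvalues_pos i) hne]
  exact h.not_gt hlt

open scoped MatrixOrder

theorem PosDef.trace_mul_sub_log_det_eq_sqrt_conj {P Λ : Matrix ι ι ℝ} (hP : P.PosDef)
    (hΛ : Λ.det ≠ 0) :
    (P * Λ).trace - Real.log Λ.det =
      (CFC.sqrt P * Λ * CFC.sqrt P).trace - Real.log (CFC.sqrt P * Λ * CFC.sqrt P).det
        + Real.log P.det := by
  have hQQ : CFC.sqrt P * CFC.sqrt P = P := CFC.sqrt_mul_sqrt_self P hP.posSemidef.nonneg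
  have hdet : (CFC.sqrt P * Λ * CFC.sqrt P).det = P.det * Λ.det := by
    rw [det_mul, det_mul, mul_right_comm, ← det_mul, hQQ]
  rw [trace_mul_cycle, hQQ, hdet, Real.log_mul hP.det_pos.ne' hΛ]
  ring

theorem PosDef.isUnit_sqrt {P : Matrix ι ι ℝ} (hP : P.PosDef) : IsUnit (CFC.sqrt P) :=
  (CFC.isUnit_sqrt_iff P hP.posSemidef.nonneg).2 hP.isUnit

theorem PosDef.sqrt_mul_mul_sqrt {P Λ : Matrix ι ι ℝ} (hP : P.PosDef) (hΛ : Λ.PosDef) :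
    (CFC.sqrt P * Λ * CFC.sqrt P).PosDef := by
  have hQ : (CFC.sqrt P)ᴴ = CFC.sqrt P := (CFC.sqrt_nonneg P).posSemidef.isHermitian
  simpa only [hQ] using hΛ.conjTranspose_mul_mul_same (B := CFC.sqrt P)
    (mulVec_injective_iff_isUnit.2 hP.isUnit_sqrt)

theorem PosDef.sqrt_mul_inv_mul_sqrt {P : Matrix ι ι ℝ} (hP : P.PosDef) :
    CFC.sqrt P * P⁻¹ * CFC.sqrt P = 1 := by
  have hQ := (isUnit_iff_isUnit_det _).1 hP.isUnit_sqrt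
  have hinv : P⁻¹ = (CFC.sqrt P)⁻¹ * (CFC.sqrt P)⁻¹ := by
    rw [← mul_inv_rev, CFC.sqrt_mul_sqrt_self P hP.posSemidef.nonneg]
  rw [hinv, mul_nonsing_inv_cancel_left _ _ hQ, nonsing_inv_mul _ hQ]

theorem PosDef.trace_mul_inv_sub_log_det_le {P Λ : Matrix ι ι ℝ} (hP : P.PosDef)
    (hΛ : Λ.PosDef) :
    (P * P⁻¹).trace - Real.log P⁻¹.det ≤ (P * Λ).trace - Real.log Λ.det := by
  rw [hP.trace_mul_sub_log_det_eq_sqrt_conj hΛ.det_pos.ne',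
    hP.trace_mul_sub_log_det_eq_sqrt_conj hP.inv.det_pos.ne', hP.sqrt_mul_inv_mul_sqrt]
  simpa using (hP.sqrt_mul_mul_sqrt hΛ).card_le_trace_sub_log_det

theorem PosDef.eq_inv_of_trace_mul_sub_log_det_le {P Λ : Matrix ι ι ℝ} (hP : P.PosDef)
    (hΛ : Λ.PosDef)
    (h : (P * Λ).trace - Real.log Λ.det ≤ (P * P⁻¹).trace - Real.log P⁻¹.det) : Λ = P⁻¹ := by
  rw [hP.trace_mul_sub_log_det_eq_sqrt_conj hΛ.det_pos.ne',
    hP.trace_mul_sub_log_det_eq_sqrt_conj hP.inv.det_pos.ne', hP.sqrt_mul_inv_mul_sqrt] at h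
  have hW := (hP.sqrt_mul_mul_sqrt hΛ).eq_one_of_trace_sub_log_det_le (by simpa using h)
  rw [← hP.sqrt_mul_inv_mul_sqrt] at hW
  exact hP.isUnit_sqrt.mul_left_cancel (hP.isUnit_sqrt.mul_right_cancel hW)

end

end Matrix

namespace AlternatingMinimization

variable {n M : ℕ}

section

/-! `gain`, `coeffStep`, `meanStep` are `A_i`, `C'_i`, `μ'` in `G`, and `Λ' = precisionStep C' μ'`. -/

variable (κ ν : ℝ) (Z : Fin M → Fin n → ℝ) (D SN : Fin M → Matrix (Fin n) (Fin n) ℝ)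
  (μ0 : Fin n → ℝ) (S0 : Matrix (Fin n) (Fin n) ℝ) (Λ : Matrix (Fin n) (Fin n) ℝ)

noncomputable def gain (i : Fin M) : Matrix (Fin n) (Fin n) ℝ :=
  Λ⁻¹ * (D i)ᵀ * (D i * Λ⁻¹ * (D i)ᵀ + SN i)⁻¹

noncomputable def meanMatrix : Matrix (Fin n) (Fin n) ℝ :=
  κ • 1 + ∑ i, gain D SN Λ i * D i

noncomputable def meanStep : Fin n → ℝ :=
  (meanMatrix κ D SN Λ)⁻¹ *ᵥ (∑ i, gain D SN Λ i *ᵥ Z i + κ • μ0)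

noncomputable def coeffStep (i : Fin M) : Fin n → ℝ :=
  gain D SN Λ i *ᵥ (Z i - D i *ᵥ meanStep κ Z D SN μ0 Λ) + meanStep κ Z D SN μ0 Λ

noncomputable def scatter (C : Fin M → Fin n → ℝ) (μ : Fin n → ℝ) : Matrix (Fin n) (Fin n) ℝ :=
  ν • S0 + κ • vecMulVec (μ - μ0) (μ - μ0) + ∑ i, vecMulVec (C i - μ) (C i - μ)

noncomputable def precisionStep (C : Fin M → Fin n → ℝ) (μ : Fin n → ℝ) :
    Matrix (Fin n) (Fin n) ℝ :=
  ((ν + M - n)⁻¹ • scatter κ ν μ0 S0 C μ)⁻¹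

theorem G_eq (x : (Fin M → Fin n → ℝ) × (Fin n → ℝ) × Matrix (Fin n) (Fin n) ℝ) :
    G n M κ ν Z D SN μ0 S0 x =
      (coeffStep κ Z D SN μ0 x.2.2, meanStep κ Z D SN μ0 x.2.2,
        precisionStep κ ν μ0 S0 (coeffStep κ Z D SN μ0 x.2.2) (meanStep κ Z D SN μ0 x.2.2)) :=
  rfl

end

variable {κ ν : ℝ} {Z : Fin M → Fin n → ℝ} {D SN : Fin M → Matrix (Fin n) (Fin n) ℝ}
  {μ0 : Fin n → ℝ} {S0 : Matrix (Fin n) (Fin n) ℝ}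

section

variable {Λ : Matrix (Fin n) (Fin n) ℝ}

theorem posDef_innovation (hΛ : Λ.PosDef) (hSN : ∀ i, (SN i).PosDef) (i : Fin M) :
    (D i * Λ⁻¹ * (D i)ᵀ + SN i).PosDef :=
  PosDef.posSemidef_add (by
    simpa using hΛ.inv.posSemidef.mul_mul_conjTranspose_same (D i)) (hSN i)

theorem mul_gain (hΛ : Λ.PosDef) (i : Fin M) :
    Λ * gain D SN Λ i = (D i)ᵀ * (D i * Λ⁻¹ * (D i)ᵀ + SN i)⁻¹ := by
  rw [gain, ← mul_assoc, ← mul_assoc, mul_nonsing_inv _ hΛ.det_pos.ne'.isUnit, one_mul]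

theorem posDef_mul_meanMatrix (hκ : 0 < κ) (hΛ : Λ.PosDef) (hSN : ∀ i, (SN i).PosDef) :
    (Λ * meanMatrix κ D SN Λ).PosDef := by
  have hsum : Λ * meanMatrix κ D SN Λ =
      κ • Λ + ∑ i, (D i)ᵀ * (D i * Λ⁻¹ * (D i)ᵀ + SN i)⁻¹ * D i := by
    simp only [meanMatrix, mul_add, Finset.mul_sum, mul_smul_comm, mul_one, ← mul_assoc,
      mul_gain hΛ]
  rw [hsum]
  refine (hΛ.smul hκ).add_posSemidef (posSemidef_sum _ fun i _ => ?_)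
  simpa using (posDef_innovation hΛ hSN i).inv.posSemidef.conjTranspose_mul_mul_same (D i)

theorem isUnit_det_meanMatrix (hκ : 0 < κ) (hΛ : Λ.PosDef) (hSN : ∀ i, (SN i).PosDef) :
    IsUnit (meanMatrix κ D SN Λ).det := by
  have h := (posDef_mul_meanMatrix (D := D) hκ hΛ hSN).det_pos
  rw [det_mul] at h
  exact (right_ne_zero_of_mul h.ne').isUnit

theorem sum_coeffStep_sub_meanStep (hκ : 0 < κ) (hΛ : Λ.PosDef) (hSN : ∀ i, (SN i).PosDef) :
    ∑ i, (coeffStep κ Z D SN μ0 Λ i - meanStep κ Z D SN μ0 Λ) =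
      κ • (meanStep κ Z D SN μ0 Λ - μ0) := by
  have hK : meanMatrix κ D SN Λ *ᵥ meanStep κ Z D SN μ0 Λ =
      ∑ i, gain D SN Λ i *ᵥ Z i + κ • μ0 := by
    rw [meanStep, mulVec_mulVec, mul_nonsing_inv _ (isUnit_det_meanMatrix hκ hΛ hSN),
      one_mulVec]
  rw [meanMatrix, add_mulVec, smul_mulVec, one_mulVec, sum_mulVec] at hK
  simp only [coeffStep, add_sub_cancel_right, mulVec_sub, mulVec_mulVec, Finset.sum_sub_distrib]
  rw [smul_sub, sub_eq_sub_iff_add_eq_add, ← hK]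

theorem mulVec_coeffStep_sub_meanStep (hΛ : Λ.PosDef) (hSN : ∀ i, (SN i).PosDef) (i : Fin M) :
    Λ *ᵥ (coeffStep κ Z D SN μ0 Λ i - meanStep κ Z D SN μ0 Λ) =
      (D i)ᵀ *ᵥ ((SN i)⁻¹ *ᵥ (Z i - D i *ᵥ coeffStep κ Z D SN μ0 Λ i)) := by
  have hB : IsUnit (D i * Λ⁻¹ * (D i)ᵀ + SN i).det :=
    (posDef_innovation hΛ hSN i).det_pos.ne'.isUnit
  have hSNB : SN i * (D i * Λ⁻¹ * (D i)ᵀ + SN i)⁻¹ = 1 - D i * gain D SN Λ i := by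
    rw [eq_sub_iff_add_eq, gain, ← mul_assoc, ← mul_assoc, ← add_mul, add_comm,
      mul_nonsing_inv _ hB]
  have hstep : coeffStep κ Z D SN μ0 Λ i - meanStep κ Z D SN μ0 Λ =
      gain D SN Λ i *ᵥ (Z i - D i *ᵥ meanStep κ Z D SN μ0 Λ) :=
    add_sub_cancel_right _ _
  have hres : Z i - D i *ᵥ coeffStep κ Z D SN μ0 Λ i =
      (SN i * (D i * Λ⁻¹ * (D i)ᵀ + SN i)⁻¹) *ᵥ (Z i - D i *ᵥ meanStep κ Z D SN μ0 Λ) := by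
    rw [hSNB, sub_mulVec, one_mulVec, ← mulVec_mulVec, ← hstep, mulVec_sub]
    abel
  rw [hstep, mulVec_mulVec, mul_gain hΛ, hres, mulVec_mulVec, mulVec_mulVec, ← mul_assoc,
    nonsing_inv_mul_cancel_right _ _ (hSN i).det_pos.ne'.isUnit]

variable (κ Z D SN μ0 Λ) in
/-- The first-order conditions for a minimizer of `f(·, ·, Λ)`. -/
def IsStationary (C : Fin M → Fin n → ℝ) (μ : Fin n → ℝ) : Prop :=
  (∀ i, Λ *ᵥ (C i - μ) = (D i)ᵀ *ᵥ ((SN i)⁻¹ *ᵥ (Z i - D i *ᵥ C i))) ∧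
    ∑ i, (C i - μ) = κ • (μ - μ0)

theorem isStationary_step (hκ : 0 < κ) (hΛ : Λ.PosDef) (hSN : ∀ i, (SN i).PosDef) :
    IsStationary κ Z D SN μ0 Λ (coeffStep κ Z D SN μ0 Λ) (meanStep κ Z D SN μ0 Λ) :=
  ⟨mulVec_coeffStep_sub_meanStep hΛ hSN, sum_coeffStep_sub_meanStep hκ hΛ hSN⟩

theorem f_eq_add_of_isStationary (hΛ : Λ.PosDef) (hSN : ∀ i, (SN i).PosDef)
    {C' : Fin M → Fin n → ℝ} {μ' : Fin n → ℝ} (hst : IsStationary κ Z D SN μ0 Λ C' μ')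
    (C : Fin M → Fin n → ℝ) (μ : Fin n → ℝ) :
    f n M κ ν Z D SN μ0 S0 C μ Λ = f n M κ ν Z D SN μ0 S0 C' μ' Λ
      + ((1/2) * ∑ i, (D i *ᵥ (C' i - C i)) ⬝ᵥ (SN i)⁻¹ *ᵥ (D i *ᵥ (C' i - C i))
        + (1/2) * ∑ i, (C i - C' i - (μ - μ')) ⬝ᵥ Λ *ᵥ (C i - C' i - (μ - μ'))
        + (κ/2) * ((μ - μ') ⬝ᵥ Λ *ᵥ (μ - μ'))) := by
  have hΛs : Λ.IsSymm := isHermitian_iff_isSymm.1 hΛ.isHermitian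
  have hSNs : ∀ i, ((SN i)⁻¹).IsSymm := fun i => isHermitian_iff_isSymm.1 (hSN i).inv.isHermitian
  have h1 : ∀ i, (Z i - D i *ᵥ C i) ⬝ᵥ (SN i)⁻¹ *ᵥ (Z i - D i *ᵥ C i) =
      (Z i - D i *ᵥ C' i) ⬝ᵥ (SN i)⁻¹ *ᵥ (Z i - D i *ᵥ C' i)
        + 2 * ((C' i - C i) ⬝ᵥ Λ *ᵥ (C' i - μ'))
        + (D i *ᵥ (C' i - C i)) ⬝ᵥ (SN i)⁻¹ *ᵥ (D i *ᵥ (C' i - C i)) := by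
    intro i
    have hcross : (D i *ᵥ (C' i - C i)) ⬝ᵥ (SN i)⁻¹ *ᵥ (Z i - D i *ᵥ C' i) =
        (C' i - C i) ⬝ᵥ Λ *ᵥ (C' i - μ') := by
      rw [hst.1 i, dotProduct_transpose_mulVec, dotProduct_comm]
    have hsplit : Z i - D i *ᵥ C i = (Z i - D i *ᵥ C' i) + D i *ᵥ (C' i - C i) := by
      rw [mulVec_sub]; abel
    rw [hsplit, (hSNs i).add_dotProduct_mulVec_add, hcross]
  have h2 : ∀ i, (C i - μ) ⬝ᵥ Λ *ᵥ (C i - μ) = (C' i - μ') ⬝ᵥ Λ *ᵥ (C' i - μ')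
      + 2 * ((C i - C' i - (μ - μ')) ⬝ᵥ Λ *ᵥ (C' i - μ'))
      + (C i - C' i - (μ - μ')) ⬝ᵥ Λ *ᵥ (C i - C' i - (μ - μ')) := by
    intro i
    rw [← hΛs.add_dotProduct_mulVec_add]
    abel_nf
  have h3 : (μ - μ0) ⬝ᵥ Λ *ᵥ (μ - μ0) = (μ' - μ0) ⬝ᵥ Λ *ᵥ (μ' - μ0)
      + 2 * ((μ - μ') ⬝ᵥ Λ *ᵥ (μ' - μ0)) + (μ - μ') ⬝ᵥ Λ *ᵥ (μ - μ') := by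
    rw [← hΛs.add_dotProduct_mulVec_add]
    abel_nf
  have hcross : ∑ i, (C' i - C i) ⬝ᵥ Λ *ᵥ (C' i - μ')
      + ∑ i, (C i - C' i - (μ - μ')) ⬝ᵥ Λ *ᵥ (C' i - μ')
      + κ * ((μ - μ') ⬝ᵥ Λ *ᵥ (μ' - μ0)) = 0 := by
    have hsum : ∀ i, C' i - C i + (C i - C' i - (μ - μ')) = -(μ - μ') := fun i => by abel
    rw [← Finset.sum_add_distrib]
    simp only [← add_dotProduct, hsum, neg_dotProduct, Finset.sum_neg_distrib, ← dotProduct_sum,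
      ← mulVec_sum, hst.2, mulVec_smul, dotProduct_smul, smul_eq_mul]
    ring
  simp only [f, h1, h2, h3, Finset.sum_add_distrib, ← Finset.mul_sum]
  linear_combination hcross

theorem f_le_of_isStationary (hκ : 0 ≤ κ) (hΛ : Λ.PosDef) (hSN : ∀ i, (SN i).PosDef)
    {C' : Fin M → Fin n → ℝ} {μ' : Fin n → ℝ} (hst : IsStationary κ Z D SN μ0 Λ C' μ')
    (C : Fin M → Fin n → ℝ) (μ : Fin n → ℝ) :
    f n M κ ν Z D SN μ0 S0 C' μ' Λ ≤ f n M κ ν Z D SN μ0 S0 C μ Λ := by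
  rw [f_eq_add_of_isStationary hΛ hSN hst C μ, le_add_iff_nonneg_right]
  have hdata := Finset.sum_nonneg fun i (_ : i ∈ Finset.univ) =>
    (hSN i).inv.posSemidef.dotProduct_mulVec_nonneg' (D i *ᵥ (C' i - C i))
  have hcoeff := Finset.sum_nonneg fun i (_ : i ∈ Finset.univ) =>
    hΛ.posSemidef.dotProduct_mulVec_nonneg' (C i - C' i - (μ - μ'))
  have hmean := hΛ.posSemidef.dotProduct_mulVec_nonneg' (μ - μ')
  positivity

theorem eq_of_isStationary_of_f_le (hκ : 0 < κ) (hΛ : Λ.PosDef) (hSN : ∀ i, (SN i).PosDef)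
    {C' : Fin M → Fin n → ℝ} {μ' : Fin n → ℝ} (hst : IsStationary κ Z D SN μ0 Λ C' μ')
    {C : Fin M → Fin n → ℝ} {μ : Fin n → ℝ}
    (h : f n M κ ν Z D SN μ0 S0 C μ Λ ≤ f n M κ ν Z D SN μ0 S0 C' μ' Λ) : C = C' ∧ μ = μ' := by
  rw [f_eq_add_of_isStationary hΛ hSN hst C μ, add_le_iff_nonpos_right] at h
  have hdata := Finset.sum_nonneg fun i (_ : i ∈ Finset.univ) =>
    (hSN i).inv.posSemidef.dotProduct_mulVec_nonneg' (D i *ᵥ (C' i - C i))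
  have hcoeff : ∀ i ∈ Finset.univ, 0 ≤ (C i - C' i - (μ - μ')) ⬝ᵥ Λ *ᵥ (C i - C' i - (μ - μ')) :=
    fun i _ => hΛ.posSemidef.dotProduct_mulVec_nonneg' _
  have hmean := hΛ.posSemidef.dotProduct_mulVec_nonneg' (μ - μ')
  have hμ : μ = μ' := sub_eq_zero.1 <| hΛ.eq_zero_of_dotProduct_mulVec_nonpos <|
    nonpos_of_mul_nonpos_right (a := κ / 2) (by linarith [Finset.sum_nonneg hcoeff]) (by positivity)
  subst hμ
  have hsum := (Finset.sum_eq_zero_iff_of_nonneg hcoeff).1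
    (by linarith [Finset.sum_nonneg hcoeff, mul_nonneg (by positivity : 0 ≤ κ / 2) hmean])
  refine ⟨funext fun i => ?_, rfl⟩
  have := hΛ.eq_zero_of_dotProduct_mulVec_nonpos (hsum i (Finset.mem_univ i)).le
  rwa [sub_self, sub_zero, sub_eq_zero] at this

end

theorem posDef_scatter (hκ : 0 ≤ κ) (hν : 0 < ν) (hS0 : S0.PosDef)
    (C : Fin M → Fin n → ℝ) (μ : Fin n → ℝ) : (scatter κ ν μ0 S0 C μ).PosDef :=
  ((hS0.smul hν).add_posSemidef ((posSemidef_vecMulVec_self_star _).smul hκ)).add_posSemidef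
    (posSemidef_sum _ fun _ _ => posSemidef_vecMulVec_self_star _)

theorem posDef_precisionStep (hκ : 0 ≤ κ) (hν : 0 < ν) (ha : 0 < ν + M - n) (hS0 : S0.PosDef)
    (C : Fin M → Fin n → ℝ) (μ : Fin n → ℝ) : (precisionStep κ ν μ0 S0 C μ).PosDef :=
  ((posDef_scatter hκ hν hS0 C μ).smul (inv_pos.2 ha)).inv

theorem f_eq_add_trace_mul_sub_log_det (ha : ν + M - n ≠ 0) (C : Fin M → Fin n → ℝ)
    (μ : Fin n → ℝ) (Λ : Matrix (Fin n) (Fin n) ℝ) :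
    f n M κ ν Z D SN μ0 S0 C μ Λ =
      (1/2) * ∑ i, (Z i - D i *ᵥ C i) ⬝ᵥ (SN i)⁻¹ *ᵥ (Z i - D i *ᵥ C i)
        + (ν + M - n) / 2 *
          (((ν + M - n)⁻¹ • scatter κ ν μ0 S0 C μ * Λ).trace - Real.log Λ.det) := by
  simp only [f, scatter, smul_mul_assoc, trace_smul, add_mul, trace_add, Finset.sum_mul,
    trace_sum, trace_vecMulVec_mul, smul_eq_mul]
  field_simp
  ring

theorem f_precisionStep_le (hκ : 0 ≤ κ) (hν : 0 < ν) (ha : 0 < ν + M - n) (hS0 : S0.PosDef)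
    (C : Fin M → Fin n → ℝ) (μ : Fin n → ℝ) {Λ : Matrix (Fin n) (Fin n) ℝ} (hΛ : Λ.PosDef) :
    f n M κ ν Z D SN μ0 S0 C μ (precisionStep κ ν μ0 S0 C μ) ≤ f n M κ ν Z D SN μ0 S0 C μ Λ := by
  have hP := (posDef_scatter (μ0 := μ0) hκ hν hS0 C μ).smul (inv_pos.2 ha)
  rw [f_eq_add_trace_mul_sub_log_det ha.ne', f_eq_add_trace_mul_sub_log_det ha.ne']
  exact (add_le_add_iff_left _).2
    (mul_le_mul_of_nonneg_left (hP.trace_mul_inv_sub_log_det_le hΛ) (half_pos ha).le)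

theorem eq_precisionStep_of_f_le (hκ : 0 ≤ κ) (hν : 0 < ν) (ha : 0 < ν + M - n)
    (hS0 : S0.PosDef) {C : Fin M → Fin n → ℝ} {μ : Fin n → ℝ} {Λ : Matrix (Fin n) (Fin n) ℝ}
    (hΛ : Λ.PosDef)
    (h : f n M κ ν Z D SN μ0 S0 C μ Λ ≤ f n M κ ν Z D SN μ0 S0 C μ (precisionStep κ ν μ0 S0 C μ)) :
    Λ = precisionStep κ ν μ0 S0 C μ := by
  have hP := (posDef_scatter (μ0 := μ0) hκ hν hS0 C μ).smul (inv_pos.2 ha)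
  rw [f_eq_add_trace_mul_sub_log_det ha.ne', f_eq_add_trace_mul_sub_log_det ha.ne',
    add_le_add_iff_left, mul_le_mul_iff_of_pos_left (half_pos ha)] at h
  exact hP.eq_inv_of_trace_mul_sub_log_det_le hΛ h

theorem posDef_G (hκ : 0 ≤ κ) (hν : 0 < ν) (ha : 0 < ν + M - n) (hS0 : S0.PosDef)
    (x : (Fin M → Fin n → ℝ) × (Fin n → ℝ) × Matrix (Fin n) (Fin n) ℝ) :
    (G n M κ ν Z D SN μ0 S0 x).2.2.PosDef :=
  posDef_precisionStep hκ hν ha hS0 (coeffStep κ Z D SN μ0 x.2.2) (meanStep κ Z D SN μ0 x.2.2)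

theorem f_G_le (hκ : 0 < κ) (hν : 0 < ν) (ha : 0 < ν + M - n) (hSN : ∀ i, (SN i).PosDef)
    (hS0 : S0.PosDef) {x : (Fin M → Fin n → ℝ) × (Fin n → ℝ) × Matrix (Fin n) (Fin n) ℝ}
    (hx : x.2.2.PosDef) :
    f n M κ ν Z D SN μ0 S0 (G n M κ ν Z D SN μ0 S0 x).1 (G n M κ ν Z D SN μ0 S0 x).2.1
      (G n M κ ν Z D SN μ0 S0 x).2.2 ≤ f n M κ ν Z D SN μ0 S0 x.1 x.2.1 x.2.2 :=
  (f_precisionStep_le hκ.le hν ha hS0 _ _ hx).trans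
    (f_le_of_isStationary hκ.le hx hSN (isStationary_step hκ hx hSN) _ _)

theorem G_eq_self_of_f_le (hκ : 0 < κ) (hν : 0 < ν) (ha : 0 < ν + M - n)
    (hSN : ∀ i, (SN i).PosDef) (hS0 : S0.PosDef)
    {x : (Fin M → Fin n → ℝ) × (Fin n → ℝ) × Matrix (Fin n) (Fin n) ℝ} (hx : x.2.2.PosDef)
    (h : f n M κ ν Z D SN μ0 S0 x.1 x.2.1 x.2.2 ≤
      f n M κ ν Z D SN μ0 S0 (G n M κ ν Z D SN μ0 S0 x).1 (G n M κ ν Z D SN μ0 S0 x).2.1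
        (G n M κ ν Z D SN μ0 S0 x).2.2) :
    G n M κ ν Z D SN μ0 S0 x = x := by
  have hst := isStationary_step (Z := Z) (D := D) (μ0 := μ0) hκ hx hSN
  have hmean := f_le_of_isStationary (ν := ν) (S0 := S0) hκ.le hx hSN hst x.1 x.2.1
  have hprec := f_precisionStep_le (Z := Z) (D := D) (SN := SN) (μ0 := μ0) hκ.le hν ha hS0
    (coeffStep κ Z D SN μ0 x.2.2) (meanStep κ Z D SN μ0 x.2.2) hx
  obtain ⟨hC, hμ⟩ := eq_of_isStationary_of_f_le hκ hx hSN hst (h.trans hprec)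
  have hΛ := eq_precisionStep_of_f_le hκ.le hν ha hS0 hx (hmean.trans h)
  exact Prod.ext hC.symm (Prod.ext hμ.symm hΛ.symm)

theorem continuousAt_G (hκ : 0 < κ) (hν : 0 < ν) (ha : 0 < ν + M - n)
    (hSN : ∀ i, (SN i).PosDef) (hS0 : S0.PosDef)
    {x : (Fin M → Fin n → ℝ) × (Fin n → ℝ) × Matrix (Fin n) (Fin n) ℝ} (hx : x.2.2.PosDef) :
    ContinuousAt (G n M κ ν Z D SN μ0 S0) x := by
  have hΛ : x.2.2.det ≠ 0 := hx.det_pos.ne'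
  have hB : ∀ i, (D i * x.2.2⁻¹ * (D i)ᵀ + SN i).det ≠ 0 :=
    fun i => (posDef_innovation hx hSN i).det_pos.ne'
  have hK : (meanMatrix κ D SN x.2.2).det ≠ 0 := (isUnit_det_meanMatrix hκ hx hSN).ne_zero
  have hP : ∀ (C : Fin M → Fin n → ℝ) μ, ((ν + M - n)⁻¹ • scatter κ ν μ0 S0 C μ).det ≠ 0 :=
    fun C μ => ((posDef_scatter hκ.le hν hS0 C μ).smul (inv_pos.2 ha)).det_pos.ne'
  have hA : ∀ i, ContinuousAt (fun y => gain D SN y.2.2 i) x := fun i => by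
    simp only [gain]
    fun_prop (disch := first | exact hΛ | exact hB i)
  have hμ : ContinuousAt (fun y => meanStep κ Z D SN μ0 y.2.2) x := by
    have : ContinuousAt (fun y => meanMatrix κ D SN y.2.2) x := by
      simp only [meanMatrix]
      fun_prop
    simp only [meanStep]
    fun_prop (disch := exact hK)
  have hC : ContinuousAt (fun y => coeffStep κ Z D SN μ0 y.2.2) x :=
    continuousAt_pi.2 fun i => by
      simp only [coeffStep]
      fun_prop
  have hS : Continuous fun p : (Fin M → Fin n → ℝ) × (Fin n → ℝ) =>
      (ν + M - n)⁻¹ • scatter κ ν μ0 S0 p.1 p.2 := by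
    simp only [scatter]
    fun_prop
  have hPc : ∀ p : (Fin M → Fin n → ℝ) × (Fin n → ℝ),
      ContinuousAt (fun p => precisionStep κ ν μ0 S0 p.1 p.2) p := fun p =>
    hS.continuousAt.matrix_inv (hP p.1 p.2)
  have hΛ' := (hPc _).comp (hC.prodMk hμ)
  exact hC.prodMk (hμ.prodMk hΛ')

variable (κ ν Z D SN μ0 S0) in
theorem continuousAt_f {x : (Fin M → Fin n → ℝ) × (Fin n → ℝ) × Matrix (Fin n) (Fin n) ℝ}
    (hx : x.2.2.det ≠ 0) :
    ContinuousAt (fun y => f n M κ ν Z D SN μ0 S0 y.1 y.2.1 y.2.2) x := by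
  unfold f
  fun_prop (disch := exact hx)

end AlternatingMinimization

/-- Every accumulation point `x*` (with positive definite Λ-component)
of the sequence generated by `x^{l+1} = G(x^l)` is a fixed point of G. -/
theorem stmt_14 (n M : ℕ) (hn : 1 ≤ n) (hM : 1 ≤ M)
    (κ ν : ℝ) (hκ : 0 < κ) (hν : (n : ℝ) - 1 < ν)
    (Z : Fin M → Fin n → ℝ) (D : Fin M → Matrix (Fin n) (Fin n) ℝ)
    (SN : Fin M → Matrix (Fin n) (Fin n) ℝ) (hSN : ∀ i, (SN i).PosDef)
    (μ0 : Fin n → ℝ) (S0 : Matrix (Fin n) (Fin n) ℝ) (hS0 : S0.PosDef)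
    (x : ℕ → (Fin M → Fin n → ℝ) × (Fin n → ℝ) × Matrix (Fin n) (Fin n) ℝ)
    (h0 : (x 0).2.2.PosDef)
    (hrec : ∀ l, x (l + 1) = G n M κ ν Z D SN μ0 S0 (x l))
    (xstar : (Fin M → Fin n → ℝ) × (Fin n → ℝ) × Matrix (Fin n) (Fin n) ℝ)
    (hstar : xstar.2.2.PosDef)
    (φ : ℕ → ℕ) (hφ : StrictMono φ)
    (hlim : Filter.Tendsto (x ∘ φ) Filter.atTop (nhds xstar)) :
    G n M κ ν Z D SN μ0 S0 xstar = xstar := by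
  have hn' : (1 : ℝ) ≤ n := by exact_mod_cast hn
  have hM' : (1 : ℝ) ≤ M := by exact_mod_cast hM
  have hν0 : 0 < ν := by linarith
  have ha : 0 < ν + M - n := by linarith
  open AlternatingMinimization in
  exact Function.isFixedPt_of_tendsto_subseq_of_descent (T := G n M κ ν Z D SN μ0 S0)
    (F := fun y => f n M κ ν Z D SN μ0 S0 y.1 y.2.1 y.2.2) (U := {y | y.2.2.PosDef})
    (fun y _ => posDef_G hκ.le hν0 ha hS0 y)
    (fun _ hy => f_G_le hκ hν0 ha hSN hS0 hy) (fun _ hy => G_eq_self_of_f_le hκ hν0 ha hSN hS0 hy)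
    h0 hrec hφ hstar hlim (continuousAt_G hκ hν0 ha hSN hS0 hstar)
    (continuousAt_f κ ν Z D SN μ0 S0 hstar.det_pos.ne')
    (continuousAt_f κ ν Z D SN μ0 S0 (posDef_G hκ.le hν0 ha hS0 xstar).det_pos.ne')
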